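/- arXiv:2310.08227 — 2 statements merged into one kernel-verified Lean document; each statement's English description precedes it below -/
import Mathlib

section
/- Let ν₁, ν₂ ∈ P(E) with ν₁(‖·‖^p) < ∞ and ν₂(‖·‖^p) < ∞, where p ≥ 1 and γ ∈ (0,1]. Then for every f ∈ C_{p,γ} one has |ν₁(f) − ν₂(f)| ≤ ‖f‖_{p,γ} · (1 + ν₁(‖·‖^p) + ν₂(‖·‖^p))^{1/2} · (W₂(ν₁,ν₂))^γ. -/
open MeasureTheory Filter Set Topology ENNReal
noncomputable section

namespace PaperProb

variable {E Ω : Type*}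

/-! ### Test function spaces `C_{p,γ}` -/

section QuasiMetric
variable [NormedAddCommGroup E]

/-- the quasi-metric `d_{p,γ}` -/
def dQ (p γ : ℝ) (u₁ u₂ : E) : ℝ :=
  min 1 (‖u₁ - u₂‖ ^ γ) * (1 + ‖u₁‖ ^ p + ‖u₂‖ ^ p) ^ ((1 : ℝ) / 2)

def wQuot (p : ℝ) (f : E → ℝ) (u : E) : ℝ :=
  |f u| / (1 + ‖u‖ ^ (p / 2))

def hQuot (p γ : ℝ) (f : E → ℝ) (pr : E × E) : ℝ :=
  |f pr.1 - f pr.2| / dQ p γ pr.1 pr.2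

/-- membership in `C_{p,γ}(S;ℝ)` -/
def MemC (S : Set E) (p γ : ℝ) (f : E → ℝ) : Prop :=
  ContinuousOn f S ∧ BddAbove (wQuot p f '' S) ∧ BddAbove (hQuot p γ f '' (S ×ˢ S))

/-- the norm `‖f‖_{p,γ}` of `C_{p,γ}(S;ℝ)` -/
def CNorm (S : Set E) (p γ : ℝ) (f : E → ℝ) : ℝ :=
  sSup (wQuot p f '' S) + sSup (hQuot p γ f '' (S ×ˢ S))

end QuasiMetric

/-! ### bounded Wasserstein distance `W₂` -/

section Wasserstein
variable [NormedAddCommGroup E] [MeasurableSpace E]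

def IsCoupling (ν₁ ν₂ : Measure E) (π : Measure (E × E)) : Prop :=
  IsProbabilityMeasure π ∧ π.map Prod.fst = ν₁ ∧ π.map Prod.snd = ν₂

def W2 (ν₁ ν₂ : Measure E) : ℝ :=
  (⨅ π : {π : Measure (E × E) // IsCoupling ν₁ ν₂ π},
      ∫ pr : E × E, min 1 (‖pr.1 - pr.2‖ ^ 2) ∂π.1) ^ ((1 : ℝ) / 2)

end Wasserstein

/-- boundedness of a test functional -/
def Bdd {α : Type*} (f : α → ℝ) : Prop := ∃ C, ∀ u, |f u| ≤ C

/-! ### Markov semigroups and invariant measures -/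

section Markov
variable [MeasurableSpace Ω]

/-- the semigroup `P_t f (x) = 𝔼[f(X^x_t)]` -/
def Pt (ℙ : Measure Ω) (X : E → ℝ → Ω → E) (t : ℝ) (f : E → ℝ) (x : E) : ℝ :=
  ∫ ω, f (X x t ω) ∂ℙ

/-- the numerical semigroup `P^Δ_{t_k} f (x) = 𝔼[f(Y^{x,Δ}_{t_k})]` -/
def PD (ℙ : Measure Ω) (Y : ℝ × ℝ → E → ℕ → Ω → E) (Δ : ℝ × ℝ) (k : ℕ)
    (f : E → ℝ) (x : E) : ℝ :=
  ∫ ω, f (Y Δ x k ω) ∂ℙ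

/-- invariant probability measure of the continuous-time Markov family -/
def IsInvMeasure [MeasurableSpace E] (ℙ : Measure Ω) (X : E → ℝ → Ω → E)
    (μ : Measure E) : Prop :=
  IsProbabilityMeasure μ ∧
    ∀ t : ℝ, 0 ≤ t → ∀ f : E → ℝ, Measurable f → Bdd f →
      ∫ x, Pt ℙ X t f x ∂μ = ∫ x, f x ∂μ

/-- invariant probability measure (supported on `S = E^h`) of the numerical chain -/
def IsInvMeasureD [MeasurableSpace E] (ℙ : Measure Ω) (Y : ℝ × ℝ → E → ℕ → Ω → E)
    (S : Set E) (Δ : ℝ × ℝ) (ν : Measure E) : Prop :=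
  IsProbabilityMeasure ν ∧ ν Sᶜ = 0 ∧
    ∀ k : ℕ, ∀ f : E → ℝ, Measurable f → Bdd f →
      ∫ x, PD ℙ Y Δ k f x ∂ν = ∫ x, f x ∂ν

end Markov

/-- admissible step sizes `Δ = (h,τ)` -/
def Adm (ht τt : ℝ) (Δ : ℝ × ℝ) : Prop :=
  Δ.1 ∈ Set.Icc (0 : ℝ) ht ∧ Δ.2 ∈ Set.Ioc (0 : ℝ) τt

/-! ### Assumptions of the paper -/

/-- Assumption 1: time-homogeneous Markov family with moment bound and contraction. -/
structure Assumption1 [NormedAddCommGroup E] [NormedSpace ℝ E] [MeasurableSpace E]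
    [BorelSpace E] {mΩ : MeasurableSpace Ω} (ℙ : Measure Ω) (ℱ : Filtration ℝ mΩ)
    (X : E → ℝ → Ω → E) (r rt γ₁ β L₁ L₂ : ℝ) (ρ : ℝ → ℝ) : Prop where
  prob : IsProbabilityMeasure ℙ
  init : ∀ x ω, X x 0 ω = x
  jmeas : ∀ t : ℝ, Measurable fun p : E × Ω => X p.1 t p.2
  pathMeas : ∀ x ω, Measurable fun t : ℝ => X x t ω
  adapted : ∀ x, ∀ t : ℝ, 0 ≤ t → Measurable[ℱ t] (X x t)
  markov : ∀ f : E → ℝ, Measurable f → Bdd f → ∀ x, ∀ s t : ℝ, 0 ≤ s → 0 ≤ t →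
    (ℙ[(fun ω => f (X x (s + t) ω))|ℱ s]) =ᵐ[ℙ] fun ω => ∫ ω', f (X (X x s ω) t ω') ∂ℙ
  hr : 2 ≤ r
  hrt : 1 ≤ rt
  hL₁ : 0 < L₁
  moment : ∀ x, ∀ t : ℝ, 0 ≤ t →
    ∫⁻ ω, (‖X x t ω‖₊ : ℝ≥0∞) ^ r ∂ℙ ≤ ENNReal.ofReal (L₁ * (1 + ‖x‖ ^ (rt * r)))
  hγ₁ : γ₁ ∈ Set.Ioc (0 : ℝ) 1
  hβ : β ∈ Set.Icc (0 : ℝ) (r - 1)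
  hL₂ : 0 < L₂
  ρ_cont : Continuous ρ
  ρ_nonneg : ∀ t, 0 ≤ ρ t
  ρ_int : IntegrableOn (fun t => ρ t ^ γ₁) (Set.Ici (0 : ℝ))
  contract : ∀ x y, ∀ t : ℝ, 0 ≤ t →
    (∫⁻ ω, (‖X x t ω - X y t ω‖₊ : ℝ≥0∞) ^ (2 : ℝ) ∂ℙ) ^ ((1 : ℝ) / 2) ≤
      ENNReal.ofReal (L₂ * ‖x - y‖ * (1 + ‖x‖ ^ β + ‖y‖ ^ β) * ρ t)

/-- Assumption 2: numerical discretization as a time-homogeneous Markov chain with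
uniform moment bound and strong-mixing-type contraction. -/
structure Assumption2 [NormedAddCommGroup E] [NormedSpace ℝ E] [MeasurableSpace E]
    [BorelSpace E] {mΩ : MeasurableSpace Ω} (ℙ : Measure Ω) (ℱ : Filtration ℝ mΩ)
    (Eh : ℝ → Set E) (Y : ℝ × ℝ → E → ℕ → Ω → E)
    (ht τt q qt γ₂ κ L₃ L₄ : ℝ) (ρD : ℝ × ℝ → ℝ → ℝ) : Prop where
  prob : IsProbabilityMeasure ℙ
  hht : ht ∈ Set.Icc (0 : ℝ) 1
  hτt : τt ∈ Set.Ioc (0 : ℝ) 1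
  hE0 : Eh 0 = Set.univ
  init : ∀ Δ, Adm ht τt Δ → ∀ x ∈ Eh Δ.1, ∀ ω, Y Δ x 0 ω = x
  stateMem : ∀ Δ, Adm ht τt Δ → ∀ x ∈ Eh Δ.1, ∀ (k : ℕ) ω, Y Δ x k ω ∈ Eh Δ.1
  jmeas : ∀ Δ, ∀ k : ℕ, Measurable fun p : E × Ω => Y Δ p.1 k p.2
  adapted : ∀ Δ, Adm ht τt Δ → ∀ x ∈ Eh Δ.1, ∀ k : ℕ,
    Measurable[ℱ ((k : ℝ) * Δ.2)] (Y Δ x k)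
  markov : ∀ Δ, Adm ht τt Δ → ∀ x ∈ Eh Δ.1, ∀ f : E → ℝ, Measurable f → Bdd f →
    ∀ j k : ℕ,
      (ℙ[(fun ω => f (Y Δ x (j + k) ω))|ℱ ((j : ℝ) * Δ.2)]) =ᵐ[ℙ]
        fun ω => ∫ ω', f (Y Δ (Y Δ x j ω) k ω') ∂ℙ
  hq : 2 ≤ q
  hqt : 1 ≤ qt
  hL₃ : 0 < L₃
  moment : ∀ Δ, Adm ht τt Δ → ∀ x ∈ Eh Δ.1, ∀ k : ℕ,
    ∫⁻ ω, (‖Y Δ x k ω‖₊ : ℝ≥0∞) ^ q ∂ℙ ≤ ENNReal.ofReal (L₃ * (1 + ‖x‖ ^ (qt * q)))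
  hγ₂ : γ₂ ∈ Set.Ioc (0 : ℝ) 1
  hκ : κ ∈ Set.Icc (0 : ℝ) (q - 1)
  hL₄ : 0 < L₄
  ρD_nonneg : ∀ Δ t, 0 ≤ ρD Δ t
  ρD_sum : ∃ B : ℝ, ∀ Δ, Adm ht τt Δ →
    Summable (fun k : ℕ => ρD Δ ((k : ℝ) * Δ.2) ^ γ₂) ∧
      Δ.2 * ∑' k : ℕ, ρD Δ ((k : ℝ) * Δ.2) ^ γ₂ ≤ B
  contract : ∀ Δ, Adm ht τt Δ → ∀ x ∈ Eh Δ.1, ∀ y ∈ Eh Δ.1, ∀ k : ℕ,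
    (∫⁻ ω, (‖Y Δ x k ω - Y Δ y k ω‖₊ : ℝ≥0∞) ^ (2 : ℝ) ∂ℙ) ^ ((1 : ℝ) / 2) ≤
      ENNReal.ofReal (L₄ * ‖x - y‖ * (1 + ‖x‖ ^ κ + ‖y‖ ^ κ) * ρD Δ ((k : ℝ) * Δ.2))

/-- Assumption 3: uniform-in-time strong convergence of order `α` of the discretization
(started at the discretized initial datum `xh h` of `x`). -/
structure Assumption3 [NormedAddCommGroup E] [MeasurableSpace E]
    {mΩ : MeasurableSpace Ω} (ℙ : Measure Ω)
    (X : E → ℝ → Ω → E) (Y : ℝ × ℝ → E → ℕ → Ω → E) (Eh : ℝ → Set E)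
    (ht τt rt qt : ℝ) (x : E) (xh : ℝ → E) (α₁ α₂ L₅ : ℝ) : Prop where
  hα₁ : 0 < α₁
  hα₂ : 0 < α₂
  hL₅ : 0 < L₅
  xh_mem : ∀ h : ℝ, h ∈ Set.Icc (0 : ℝ) ht → xh h ∈ Eh h
  xh_eq : ∀ h : ℝ, x ∈ Eh h → xh h = x
  conv : ∀ Δ, Adm ht τt Δ → ∀ t : ℝ, 0 ≤ t →
    (∫⁻ ω, (‖X x t ω - Y Δ (xh Δ.1) ⌊t / Δ.2⌋₊ ω‖₊ : ℝ≥0∞) ^ (2 : ℝ) ∂ℙ) ^ ((1 : ℝ) / 2) ≤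
      ENNReal.ofReal (L₅ * (1 + ‖x‖ ^ (max rt qt)) * (Δ.1 ^ α₁ + Δ.2 ^ α₂))

/-! ### the discrete martingale and related objects -/

/-- the filtration `{F_{t_k}}_{k∈ℕ}` -/
def natFiltration {mΩ : MeasurableSpace Ω} (ℱ : Filtration ℝ mΩ) (τ : ℝ) (hτ : 0 ≤ τ) :
    Filtration ℕ mΩ where
  seq k := ℱ ((k : ℝ) * τ)
  mono' := fun _ _ hij =>
    ℱ.mono (mul_le_mul_of_nonneg_right (by exact_mod_cast hij) hτ)
  le' k := ℱ.le _

/-- the discrete martingale `M^{x^h,Δ}_k` (here `m` stands for `μ^Δ(f)`) -/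
def Mart [MeasurableSpace Ω] (ℙ : Measure Ω) (Y : ℝ × ℝ → E → ℕ → Ω → E)
    (Δ : ℝ × ℝ) (f : E → ℝ) (m : ℝ) (xh : E) (k : ℕ) (ω : Ω) : ℝ :=
  Δ.2 * ∑ i ∈ Finset.range k, (f (Y Δ xh i ω) - m) +
    Δ.2 * ∑' i : ℕ, (PD ℙ Y Δ i f (Y Δ xh k ω) - m) -
    Δ.2 * ∑' i : ℕ, (PD ℙ Y Δ i f xh - m)

/-- the martingale difference sequence `Z^{x^h,Δ}_k` -/
def Zseq [MeasurableSpace Ω] (ℙ : Measure Ω) (Y : ℝ × ℝ → E → ℕ → Ω → E)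
    (Δ : ℝ × ℝ) (f : E → ℝ) (m : ℝ) (xh : E) (k : ℕ) (ω : Ω) : ℝ :=
  if k = 0 then 0 else Mart ℙ Y Δ f m xh k ω - Mart ℙ Y Δ f m xh (k - 1) ω

/-- the conditional-variance function `H^Δ` -/
def Hfun [MeasurableSpace Ω] (ℙ : Measure Ω) (Y : ℝ × ℝ → E → ℕ → Ω → E)
    (Δ : ℝ × ℝ) (f : E → ℝ) (m : ℝ) (u : E) : ℝ :=
  -(Δ.2 ^ 2) * |f u - m| ^ 2 +
    Δ.2 ^ 2 * ∫ ω, |∑' i : ℕ, (PD ℙ Y Δ i f (Y Δ u 1 ω) - m)| ^ 2 ∂ℙ -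
    Δ.2 ^ 2 * |∑' i : ℕ, (PD ℙ Y Δ i f u - m)| ^ 2 +
    2 * Δ.2 ^ 2 * (f u - m) * ∑' i : ℕ, (PD ℙ Y Δ i f u - m)

/-! For any coupling `π` of `ν₁` and `ν₂`, the Hölder part `[f]` of `‖f‖_{p,γ}` gives
`|ν₁(f) - ν₂(f)| ≤ [f] ∫ min(1, ‖u₁ - u₂‖^γ) (1 + ‖u₁‖^p + ‖u₂‖^p)^{1/2} dπ`.
Cauchy–Schwarz splits the integral into the moment factor and
`(∫ min(1, ‖u₁ - u₂‖²)^γ dπ)^{1/2}`, and Jensen's inequality for the concave map `x ↦ x^γ`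
bounds the latter by `(∫ min(1, ‖u₁ - u₂‖²) dπ)^{γ/2}`. Taking the infimum over couplings
turns this into `W₂^γ`. -/

lemma rpow_div_two_le_one_add_rpow {t : ℝ} (ht : 0 ≤ t) (p : ℝ) : t ^ (p / 2) ≤ 1 + t ^ p := by
  have hsq : t ^ p = (t ^ (p / 2)) ^ 2 := by
    rw [← Real.rpow_natCast, ← Real.rpow_mul ht]; norm_num
  nlinarith [sq_nonneg (t ^ (p / 2) - 1)]

lemma min_one_rpow_rpow_two {t : ℝ} (ht : 0 ≤ t) {γ : ℝ} (hγ : 0 ≤ γ) :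
    min 1 (t ^ γ) ^ (2 : ℝ) = min 1 (t ^ 2) ^ γ := by
  rcases le_total t 1 with h | h
  · rw [min_eq_right (Real.rpow_le_one ht h hγ), min_eq_right (pow_le_one₀ ht h),
      ← Real.rpow_natCast, ← Real.rpow_mul ht, ← Real.rpow_mul ht, mul_comm]
    norm_num
  · rw [min_eq_left (Real.one_le_rpow h hγ), min_eq_left (one_le_pow₀ h), Real.one_rpow,
      Real.one_rpow]

lemma integral_rpow_le_rpow_integral {α : Type*} [MeasurableSpace α] {μ : Measure α}
    [IsProbabilityMeasure μ] {g : α → ℝ} (hg : 0 ≤ᵐ[μ] g) (hgi : Integrable g μ)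
    {γ : ℝ} (hγ₀ : 0 ≤ γ) (hγ₁ : γ ≤ 1) (hgγ : Integrable (fun x => g x ^ γ) μ) :
    ∫ x, g x ^ γ ∂μ ≤ (∫ x, g x ∂μ) ^ γ :=
  (Real.concaveOn_rpow hγ₀ hγ₁).le_map_integral
    (fun x _ => (Real.continuousAt_rpow_const x γ (Or.inr hγ₀)).continuousWithinAt)
    isClosed_Ici hg hgi hgγ

lemma le_mul_iInf_rpow {ι : Sort*} [Nonempty ι] {c : ι → ℝ} (hc : ∀ i, 0 ≤ c i)
    {A K e : ℝ} (hK : 0 ≤ K) (he : 0 < e) (h : ∀ i, A ≤ K * c i ^ e) :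
    A ≤ K * (⨅ i, c i) ^ e := by
  have hmono : MonotoneOn (fun x : ℝ => K * x ^ e) (range c) := by
    rintro _ ⟨i, rfl⟩ _ ⟨j, rfl⟩ hij
    exact mul_le_mul_of_nonneg_left (Real.rpow_le_rpow (hc i) hij he.le) hK
  have hcont : ContinuousWithinAt (fun x : ℝ => K * x ^ e) (range c) (⨅ i, c i) :=
    (continuousAt_const.mul (Real.continuousAt_rpow_const _ _ (Or.inr he.le))).continuousWithinAt
  rw [iInf, hmono.map_csInf_of_continuousWithinAt hcont (range_nonempty c)
    ⟨0, by rintro _ ⟨i, rfl⟩; exact hc i⟩]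
  refine le_csInf ((range_nonempty c).image _) ?_
  rintro _ ⟨_, ⟨i, rfl⟩, rfl⟩
  exact h i

section TestFunctions

variable [NormedAddCommGroup E] {p γ : ℝ} {f : E → ℝ}

lemma dQ_nonneg (p γ : ℝ) (u₁ u₂ : E) : 0 ≤ dQ p γ u₁ u₂ := by
  unfold dQ; positivity

lemma dQ_pos {u₁ u₂ : E} (h : u₁ ≠ u₂) (p γ : ℝ) : 0 < dQ p γ u₁ u₂ := by
  have : 0 < ‖u₁ - u₂‖ := norm_pos_iff.2 (sub_ne_zero.2 h)
  unfold dQ; positivity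

lemma sSup_wQuot_nonneg (p : ℝ) (f : E → ℝ) (S : Set E) : 0 ≤ sSup (wQuot p f '' S) :=
  Real.sSup_nonneg <| forall_mem_image.2 fun _ _ => div_nonneg (abs_nonneg _) (by positivity)

lemma sSup_hQuot_nonneg (p γ : ℝ) (f : E → ℝ) (S : Set (E × E)) :
    0 ≤ sSup (hQuot p γ f '' S) :=
  Real.sSup_nonneg <| forall_mem_image.2 fun _ _ => div_nonneg (abs_nonneg _) (dQ_nonneg _ _ _ _)

lemma sSup_hQuot_le_cNorm (p γ : ℝ) (f : E → ℝ) (S : Set E) :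
    sSup (hQuot p γ f '' S ×ˢ S) ≤ CNorm S p γ f :=
  le_add_of_nonneg_left (sSup_wQuot_nonneg p f S)

lemma cNorm_nonneg (p γ : ℝ) (f : E → ℝ) (S : Set E) : 0 ≤ CNorm S p γ f :=
  add_nonneg (sSup_wQuot_nonneg p f S) (sSup_hQuot_nonneg p γ f _)

lemma MemC.abs_sub_le (hf : MemC univ p γ f) (u₁ u₂ : E) :
    |f u₁ - f u₂| ≤ sSup (hQuot p γ f '' univ ×ˢ univ) * dQ p γ u₁ u₂ := by
  rcases eq_or_ne u₁ u₂ with rfl | h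
  · rw [sub_self, abs_zero]
    exact mul_nonneg (sSup_hQuot_nonneg p γ f _) (dQ_nonneg p γ u₁ u₁)
  · rw [← div_le_iff₀ (dQ_pos h p γ)]
    exact le_csSup hf.2.2 ⟨(u₁, u₂), by simp, rfl⟩

lemma MemC.abs_le (hf : MemC univ p γ f) (u : E) :
    |f u| ≤ sSup (wQuot p f '' univ) * (1 + ‖u‖ ^ (p / 2)) := by
  rw [← div_le_iff₀ (by positivity)]
  exact le_csSup hf.2.1 ⟨u, mem_univ _, rfl⟩

lemma MemC.integrable [MeasurableSpace E] [OpensMeasurableSpace E] (hf : MemC univ p γ f)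
    {ν : Measure E} [IsFiniteMeasure ν] (hν : Integrable (fun u => ‖u‖ ^ p) ν) :
    Integrable f ν := by
  set C := sSup (wQuot p f '' univ)
  refine Integrable.mono' ((integrable_const (2 * C)).add (hν.const_mul C))
    (continuousOn_univ.1 hf.1).aestronglyMeasurable (ae_of_all _ fun u => ?_)
  have hC : 0 ≤ C := sSup_wQuot_nonneg p f univ
  calc ‖f u‖ ≤ C * (1 + ‖u‖ ^ (p / 2)) := hf.abs_le u
    _ ≤ C * (2 + ‖u‖ ^ p) := by
      have := rpow_div_two_le_one_add_rpow (norm_nonneg u) p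
      exact mul_le_mul_of_nonneg_left (by linarith) hC
    _ = 2 * C + C * ‖u‖ ^ p := by ring

end TestFunctions

namespace IsCoupling

variable [MeasurableSpace E] {ν₁ ν₂ : Measure E} {π : Measure (E × E)}
  {F : Type*} [NormedAddCommGroup F]

lemma integrable_comp_fst (hπ : IsCoupling ν₁ ν₂ π) {g : E → F} (hg : Integrable g ν₁) :
    Integrable (fun pr => g pr.1) π := by
  rw [← hπ.2.1] at hg
  exact hg.comp_measurable measurable_fst

lemma integrable_comp_snd (hπ : IsCoupling ν₁ ν₂ π) {g : E → F} (hg : Integrable g ν₂) :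
    Integrable (fun pr => g pr.2) π := by
  rw [← hπ.2.2] at hg
  exact hg.comp_measurable measurable_snd

variable [NormedSpace ℝ F]

lemma integral_comp_fst (hπ : IsCoupling ν₁ ν₂ π) {g : E → F}
    (hg : AEStronglyMeasurable g ν₁) : ∫ pr, g pr.1 ∂π = ∫ u, g u ∂ν₁ := by
  rw [← hπ.2.1] at hg ⊢
  exact (integral_map measurable_fst.aemeasurable hg).symm

lemma integral_comp_snd (hπ : IsCoupling ν₁ ν₂ π) {g : E → F}
    (hg : AEStronglyMeasurable g ν₂) : ∫ pr, g pr.2 ∂π = ∫ u, g u ∂ν₂ := by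
  rw [← hπ.2.2] at hg ⊢
  exact (integral_map measurable_snd.aemeasurable hg).symm

lemma abs_integral_sub_le (hπ : IsCoupling ν₁ ν₂ π) {f : E → ℝ} (hf₁ : Integrable f ν₁)
    (hf₂ : Integrable f ν₂) :
    |(∫ u, f u ∂ν₁) - ∫ u, f u ∂ν₂| ≤ ∫ pr, |f pr.1 - f pr.2| ∂π := by
  rw [← hπ.integral_comp_fst hf₁.1, ← hπ.integral_comp_snd hf₂.1,
    ← integral_sub (hπ.integrable_comp_fst hf₁) (hπ.integrable_comp_snd hf₂)]
  exact abs_integral_le_integral_abs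

variable [NormedAddCommGroup E] {p : ℝ}

lemma integrable_one_add_rpow_add_rpow (hπ : IsCoupling ν₁ ν₂ π)
    (h₁ : Integrable (fun u => ‖u‖ ^ p) ν₁) (h₂ : Integrable (fun u => ‖u‖ ^ p) ν₂) :
    Integrable (fun pr : E × E => 1 + ‖pr.1‖ ^ p + ‖pr.2‖ ^ p) π :=
  have := hπ.1
  ((integrable_const 1).add (hπ.integrable_comp_fst h₁)).add (hπ.integrable_comp_snd h₂)

lemma integral_one_add_rpow_add_rpow (hπ : IsCoupling ν₁ ν₂ π)
    (h₁ : Integrable (fun u => ‖u‖ ^ p) ν₁) (h₂ : Integrable (fun u => ‖u‖ ^ p) ν₂) :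
    ∫ pr : E × E, 1 + ‖pr.1‖ ^ p + ‖pr.2‖ ^ p ∂π =
      1 + (∫ u, ‖u‖ ^ p ∂ν₁) + ∫ u, ‖u‖ ^ p ∂ν₂ := by
  have := hπ.1
  have h₁π : Integrable (fun pr : E × E => 1 + ‖pr.1‖ ^ p) π :=
    (integrable_const 1).add (hπ.integrable_comp_fst h₁)
  rw [integral_add h₁π (hπ.integrable_comp_snd h₂),
    integral_add (integrable_const 1) (hπ.integrable_comp_fst h₁),
    hπ.integral_comp_fst h₁.1, hπ.integral_comp_snd h₂.1]
  simp

end IsCoupling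

section CouplingBound

variable [NormedAddCommGroup E] [MeasurableSpace E] [BorelSpace E] [SecondCountableTopology E]
  {ν₁ ν₂ : Measure E} {π : Measure (E × E)} {p γ : ℝ}

lemma IsCoupling.integrable_dQ (hπ : IsCoupling ν₁ ν₂ π)
    (h₁ : Integrable (fun u => ‖u‖ ^ p) ν₁) (h₂ : Integrable (fun u => ‖u‖ ^ p) ν₂) :
    Integrable (fun pr : E × E => dQ p γ pr.1 pr.2) π := by
  refine (hπ.integrable_one_add_rpow_add_rpow h₁ h₂).mono' (by unfold dQ; fun_prop)
    (ae_of_all _ fun pr => ?_)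
  have hone : 1 ≤ 1 + ‖pr.1‖ ^ p + ‖pr.2‖ ^ p := by
    have := Real.rpow_nonneg (norm_nonneg pr.1) p
    have := Real.rpow_nonneg (norm_nonneg pr.2) p
    linarith
  rw [Real.norm_of_nonneg (dQ_nonneg _ _ _ _)]
  calc dQ p γ pr.1 pr.2 ≤ 1 * (1 + ‖pr.1‖ ^ p + ‖pr.2‖ ^ p) ^ (1 : ℝ) :=
        mul_le_mul (min_le_left _ _) (Real.rpow_le_rpow_of_exponent_le hone (by norm_num))
          (by positivity) zero_le_one
    _ = 1 + ‖pr.1‖ ^ p + ‖pr.2‖ ^ p := by simp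

lemma IsCoupling.integral_dQ_le (hπ : IsCoupling ν₁ ν₂ π)
    (h₁ : Integrable (fun u => ‖u‖ ^ p) ν₁) (h₂ : Integrable (fun u => ‖u‖ ^ p) ν₂)
    (hγ₀ : 0 ≤ γ) (hγ₁ : γ ≤ 1) :
    ∫ pr, dQ p γ pr.1 pr.2 ∂π ≤
      (1 + (∫ u, ‖u‖ ^ p ∂ν₁) + ∫ u, ‖u‖ ^ p ∂ν₂) ^ ((1 : ℝ) / 2) *
        (∫ pr : E × E, min 1 (‖pr.1 - pr.2‖ ^ 2) ∂π) ^ (γ / 2) := by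
  have := hπ.1
  set a : E × E → ℝ := fun pr => min 1 (‖pr.1 - pr.2‖ ^ γ)
  set w : E × E → ℝ := fun pr => 1 + ‖pr.1‖ ^ p + ‖pr.2‖ ^ p
  set c : E × E → ℝ := fun pr => min 1 (‖pr.1 - pr.2‖ ^ 2)
  have hw : Integrable w π := hπ.integrable_one_add_rpow_add_rpow h₁ h₂
  have hw₀ : ∀ pr, 0 ≤ w pr := fun pr => by positivity
  have hc : Integrable c π :=
    (integrable_const 1).mono' (by fun_prop) (ae_of_all _ fun pr => by
      rw [Real.norm_of_nonneg (by positivity)]; exact min_le_left _ _)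
  have ha : MemLp a (ENNReal.ofReal 2) π :=
    MemLp.of_bound (by fun_prop) 1 (ae_of_all _ fun pr => by
      rw [Real.norm_of_nonneg (by positivity)]; exact min_le_left _ _)
  have hsqrt_sq : ∀ pr, (w pr ^ ((1 : ℝ) / 2)) ^ (2 : ℝ) = w pr := fun pr => by
    rw [← Real.rpow_mul (hw₀ pr)]; norm_num
  have hb : MemLp (fun pr => w pr ^ ((1 : ℝ) / 2)) (ENNReal.ofReal 2) π := by
    rw [ENNReal.ofReal_ofNat,
      memLp_two_iff_integrable_sq (hw.aemeasurable.pow_const _).aestronglyMeasurable]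
    simpa only [← Real.rpow_natCast, Nat.cast_ofNat, hsqrt_sq] using hw
  have hJensen : ∫ pr, a pr ^ (2 : ℝ) ∂π ≤ (∫ pr, c pr ∂π) ^ γ := by
    simp only [a, min_one_rpow_rpow_two (norm_nonneg _) hγ₀]
    exact integral_rpow_le_rpow_integral (ae_of_all _ fun pr => by positivity) hc hγ₀ hγ₁
      ((integrable_const 1).mono' (by fun_prop) (ae_of_all _ fun pr => by
        rw [Real.norm_of_nonneg (by positivity)]
        exact Real.rpow_le_one (by positivity) (min_le_left _ _) hγ₀))
  calc ∫ pr, dQ p γ pr.1 pr.2 ∂π = ∫ pr, a pr * w pr ^ ((1 : ℝ) / 2) ∂π := rfl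
    _ ≤ (∫ pr, a pr ^ (2 : ℝ) ∂π) ^ ((1 : ℝ) / 2) *
          (∫ pr, (w pr ^ ((1 : ℝ) / 2)) ^ (2 : ℝ) ∂π) ^ ((1 : ℝ) / 2) :=
      integral_mul_le_Lp_mul_Lq_of_nonneg Real.HolderConjugate.two_two
        (ae_of_all _ fun pr => by positivity) (ae_of_all _ fun pr => by positivity) ha hb
    _ ≤ ((∫ pr, c pr ∂π) ^ γ) ^ ((1 : ℝ) / 2) * (∫ pr, w pr ∂π) ^ ((1 : ℝ) / 2) := by
      simp only [hsqrt_sq]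
      gcongr
    _ = _ := by
      rw [hπ.integral_one_add_rpow_add_rpow h₁ h₂, ← Real.rpow_mul
        (integral_nonneg fun pr => by positivity), mul_comm, mul_one_div]

lemma IsCoupling.abs_integral_sub_le_of_memC (hπ : IsCoupling ν₁ ν₂ π)
    (h₁ : Integrable (fun u => ‖u‖ ^ p) ν₁) (h₂ : Integrable (fun u => ‖u‖ ^ p) ν₂)
    (hγ₀ : 0 ≤ γ) (hγ₁ : γ ≤ 1) {f : E → ℝ} (hf : MemC univ p γ f)
    [IsFiniteMeasure ν₁] [IsFiniteMeasure ν₂] :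
    |(∫ u, f u ∂ν₁) - ∫ u, f u ∂ν₂| ≤
      sSup (hQuot p γ f '' univ ×ˢ univ) *
        (1 + (∫ u, ‖u‖ ^ p ∂ν₁) + ∫ u, ‖u‖ ^ p ∂ν₂) ^ ((1 : ℝ) / 2) *
        (∫ pr : E × E, min 1 (‖pr.1 - pr.2‖ ^ 2) ∂π) ^ (γ / 2) := by
  calc |(∫ u, f u ∂ν₁) - ∫ u, f u ∂ν₂| ≤ ∫ pr, |f pr.1 - f pr.2| ∂π :=
        hπ.abs_integral_sub_le (hf.integrable h₁) (hf.integrable h₂)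
    _ ≤ ∫ pr, sSup (hQuot p γ f '' univ ×ˢ univ) * dQ p γ pr.1 pr.2 ∂π :=
        integral_mono ((hπ.integrable_comp_fst (hf.integrable h₁)).sub
          (hπ.integrable_comp_snd (hf.integrable h₂))).abs
          ((hπ.integrable_dQ h₁ h₂).const_mul _) fun pr => hf.abs_sub_le pr.1 pr.2
    _ ≤ _ := by
      rw [integral_const_mul, mul_assoc]
      exact mul_le_mul_of_nonneg_left (hπ.integral_dQ_le h₁ h₂ hγ₀ hγ₁)
        (sSup_hQuot_nonneg p γ f _)

end CouplingBound

theorem statement0_general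
    {E : Type*} [NormedAddCommGroup E]
    [SecondCountableTopology E] [MeasurableSpace E] [BorelSpace E]
    (ν₁ ν₂ : Measure E) [IsProbabilityMeasure ν₁] [IsProbabilityMeasure ν₂]
    (p γ : ℝ) (hγ : γ ∈ Set.Ioc (0 : ℝ) 1)
    (h₁ : Integrable (fun u => ‖u‖ ^ p) ν₁)
    (h₂ : Integrable (fun u => ‖u‖ ^ p) ν₂)
    (f : E → ℝ) (hf : MemC Set.univ p γ f) :
    |(∫ u, f u ∂ν₁) - ∫ u, f u ∂ν₂| ≤
      CNorm Set.univ p γ f *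
        (1 + (∫ u, ‖u‖ ^ p ∂ν₁) + ∫ u, ‖u‖ ^ p ∂ν₂) ^ ((1 : ℝ) / 2) *
        W2 ν₁ ν₂ ^ γ := by
  have : Nonempty {π : Measure (E × E) // IsCoupling ν₁ ν₂ π} :=
    ⟨ν₁.prod ν₂, inferInstance, by simp, by simp⟩
  have hcost : ∀ π : {π : Measure (E × E) // IsCoupling ν₁ ν₂ π},
      0 ≤ ∫ pr : E × E, min 1 (‖pr.1 - pr.2‖ ^ 2) ∂π.1 :=
    fun π => integral_nonneg fun pr => by positivity
  have hmoment : 0 ≤ 1 + (∫ u, ‖u‖ ^ p ∂ν₁) + ∫ u, ‖u‖ ^ p ∂ν₂ := by positivity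
  have hW2 : W2 ν₁ ν₂ ^ γ =
      (⨅ π : {π : Measure (E × E) // IsCoupling ν₁ ν₂ π},
        ∫ pr : E × E, min 1 (‖pr.1 - pr.2‖ ^ 2) ∂π.1) ^ (γ / 2) := by
    rw [W2, ← Real.rpow_mul (Real.iInf_nonneg hcost), one_div_mul_eq_div]
  rw [hW2]
  refine le_mul_iInf_rpow hcost (mul_nonneg (cNorm_nonneg p γ f univ)
    (Real.rpow_nonneg hmoment _)) (half_pos hγ.1) fun π => ?_
  refine (π.2.abs_integral_sub_le_of_memC h₁ h₂ hγ.1.le hγ.2 hf).trans ?_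
  gcongr
  exact sSup_hQuot_le_cNorm p γ f univ

/-- weighted-Hölder test functionals are Lipschitz w.r.t. the
bounded Wasserstein distance `W₂`:
`|ν₁(f) − ν₂(f)| ≤ ‖f‖_{p,γ} (1 + ν₁(‖·‖^p) + ν₂(‖·‖^p))^{1/2} (W₂(ν₁,ν₂))^γ`. -/
theorem statement0
    {E : Type*} [NormedAddCommGroup E] [NormedSpace ℝ E] [CompleteSpace E]
    [SecondCountableTopology E] [MeasurableSpace E] [BorelSpace E]
    (ν₁ ν₂ : Measure E) [IsProbabilityMeasure ν₁] [IsProbabilityMeasure ν₂]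
    (p γ : ℝ) (hp : 1 ≤ p) (hγ : γ ∈ Set.Ioc (0 : ℝ) 1)
    (h₁ : Integrable (fun u => ‖u‖ ^ p) ν₁)
    (h₂ : Integrable (fun u => ‖u‖ ^ p) ν₂)
    (f : E → ℝ) (hf : MemC Set.univ p γ f) :
    |(∫ u, f u ∂ν₁) - ∫ u, f u ∂ν₂| ≤
      CNorm Set.univ p γ f *
        (1 + (∫ u, ‖u‖ ^ p ∂ν₁) + ∫ u, ‖u‖ ^ p ∂ν₂) ^ ((1 : ℝ) / 2) *
        W2 ν₁ ν₂ ^ γ :=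
  statement0_general ν₁ ν₂ p γ hγ h₁ h₂ f hf
end PaperProb
end
end

section
/- Under Assumptions 1–3, there exists a constant K, independent of the admissible step size Δ = (h,τ), such that W₂(μ, μ^Δ) ≤ K·|Δ^α| for every admissible Δ, where |Δ^α| := h^{α₁}+τ^{α₂} and μ^Δ is regarded as a probability measure on E. -/
open MeasureTheory Filter Set Topology ENNReal
noncomputable section

namespace PaperProb

variable {E Ω : Type*}

/-!
Couple `μ` and `μ^Δ` synchronously: start `X` from `u ∼ μ` and the chain `Y` from `v ∼ μ^Δ`
independently and drive both with the same noise up to times `t_n → ∞` along which `ρ(t_n) → 0`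
(such times exist because `∫ ρ^γ₁ < ∞`). By invariance the two marginals at time `t_n` are again
`μ` and `μ^Δ`. The triangle inequality through `X^x_{t_n}` and `Y^{x^h,Δ}_{t_n}` splits the
truncated cost into two contraction terms, which vanish as `n → ∞` by dominated convergence since
the cost is bounded by `1`, and the strong error `L₅ (1 + ‖x‖^{max(r̃,q̃)}) |Δ^α|` of
Assumption 3. Hence `W₂(μ, μ^Δ) ≤ √3 L₅ (1 + ‖x‖^{max(r̃,q̃)}) |Δ^α|`.
-/

def truncSq (d : ℝ) : ℝ≥0∞ := ENNReal.ofReal (min 1 (d ^ 2))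

lemma truncSq_le_one (d : ℝ) : truncSq d ≤ 1 :=
  ENNReal.ofReal_le_one.mpr (min_le_left _ _)

lemma truncSq_zero : truncSq 0 = 0 := by simp [truncSq]

lemma continuous_truncSq : Continuous truncSq :=
  ENNReal.continuous_ofReal.comp (continuous_const.min (continuous_pow 2))

lemma truncSq_le_of_le_add₃ {a b c d : ℝ} (hd : 0 ≤ d) (h : d ≤ a + b + c) :
    truncSq d ≤ 3 * truncSq a + 3 * truncSq b + 3 * truncSq c := by
  have key : min 1 (d ^ 2) ≤ 3 * min 1 (a ^ 2) + 3 * min 1 (b ^ 2) + 3 * min 1 (c ^ 2) := by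
    rcases min_cases 1 (a ^ 2) with ⟨ea, _⟩ | ⟨ea, _⟩ <;>
    rcases min_cases 1 (b ^ 2) with ⟨eb, _⟩ | ⟨eb, _⟩ <;>
    rcases min_cases 1 (c ^ 2) with ⟨ec, _⟩ | ⟨ec, _⟩ <;>
    rw [ea, eb, ec] <;>
    nlinarith [min_le_left 1 (d ^ 2), min_le_right 1 (d ^ 2), sq_nonneg (a - b),
      sq_nonneg (b - c), sq_nonneg (a - c), sq_nonneg a, sq_nonneg b, sq_nonneg c]
  have h0 : ∀ y : ℝ, 0 ≤ 3 * min 1 (y ^ 2) := fun y => by positivity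
  simpa only [truncSq, ENNReal.ofReal_add (add_nonneg (h0 a) (h0 b)) (h0 c),
    ENNReal.ofReal_add (h0 a) (h0 b), ENNReal.ofReal_mul (by norm_num : (0 : ℝ) ≤ 3),
    ENNReal.ofReal_ofNat] using ENNReal.ofReal_le_ofReal key

lemma eLpNorm_two_eq {F : Type*} [NormedAddCommGroup F] [MeasurableSpace Ω] (ℙ : Measure Ω)
    (Z : Ω → F) :
    eLpNorm Z 2 ℙ = (∫⁻ ω, (‖Z ω‖₊ : ℝ≥0∞) ^ (2 : ℝ) ∂ℙ) ^ ((1 : ℝ) / 2) := by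
  simp [eLpNorm_eq_lintegral_rpow_enorm_toReal, enorm_eq_nnnorm]

lemma lintegral_truncSq_le_of_eLpNorm_le {F : Type*} [NormedAddCommGroup F] [MeasurableSpace Ω]
    {ℙ : Measure Ω} [IsProbabilityMeasure ℙ] {Z : Ω → F} {R : ℝ}
    (h : eLpNorm Z 2 ℙ ≤ ENNReal.ofReal R) :
    ∫⁻ ω, truncSq ‖Z ω‖ ∂ℙ ≤ truncSq R := by
  have hsq : ∫⁻ ω, ‖Z ω‖ₑ ^ (2 : ℝ) ∂ℙ ≤ ENNReal.ofReal (R ^ 2) := by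
    have hR : ENNReal.ofReal R ^ 2 ≤ ENNReal.ofReal (R ^ 2) := by
      rcases le_total 0 R with hR | hR
      · rw [ENNReal.ofReal_pow hR]
      · simp [ENNReal.ofReal_of_nonpos hR]
    rw [lintegral_rpow_enorm_eq_rpow_eLpNorm' zero_lt_two, ENNReal.rpow_two]
    exact (pow_le_pow_left₀ zero_le (by simpa [eLpNorm_eq_eLpNorm'] using h) 2).trans hR
  rw [truncSq, ENNReal.ofReal_min, ENNReal.ofReal_one]
  refine le_min ((lintegral_mono fun ω => truncSq_le_one _).trans (by simp)) ?_
  refine (lintegral_mono fun ω => ?_).trans hsq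
  rw [ENNReal.rpow_two, ← ofReal_norm, ← ENNReal.ofReal_pow (norm_nonneg _)]
  exact ENNReal.ofReal_le_ofReal (min_le_right _ _)

lemma exists_ge_le_of_integrableOn_rpow {f : ℝ → ℝ} {γ : ℝ} (hγ : 0 < γ)
    (hf : IntegrableOn (fun t => f t ^ γ) (Ici 0)) {a c : ℝ} (ha : 0 ≤ a) (hc : 0 < c) :
    ∃ s, a ≤ s ∧ f s ≤ c := by
  by_contra! hbig
  have hconst : IntegrableOn (fun _ : ℝ => c ^ γ) (Ici a) := by
    refine Integrable.mono' (hf.mono_set (Ici_subset_Ici.mpr ha)) aestronglyMeasurable_const ?_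
    filter_upwards [ae_restrict_mem measurableSet_Ici] with s hs
    rw [Real.norm_of_nonneg (by positivity)]
    exact Real.rpow_le_rpow hc.le (hbig s hs).le hγ.le
  rw [integrableOn_const_iff] at hconst
  rcases hconst with h0 | hfin
  · exact (Real.rpow_pos_of_pos hc γ).ne' (enorm_eq_zero.mp h0)
  · simp [Real.volume_Ici] at hfin

lemma exists_seq_tendsto_zero_of_integrableOn_rpow {f : ℝ → ℝ} {γ : ℝ} (hγ : 0 < γ)
    (hf0 : ∀ t, 0 ≤ f t) (hf : IntegrableOn (fun t => f t ^ γ) (Ici 0)) :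
    ∃ t : ℕ → ℝ, (∀ n : ℕ, (n : ℝ) ≤ t n) ∧ Tendsto (fun n => f (t n)) atTop (𝓝 0) := by
  choose t ht_ge ht_le using fun n : ℕ =>
    exists_ge_le_of_integrableOn_rpow hγ hf n.cast_nonneg (Nat.one_div_pos_of_nat (α := ℝ))
  exact ⟨t, ht_ge, squeeze_zero (fun n => hf0 _) ht_le tendsto_one_div_add_atTop_nhds_zero_nat⟩

lemma tendsto_zero_of_summable_rpow {g : ℕ → ℝ} {γ : ℝ} (hγ : 0 < γ) (hg : ∀ k, 0 ≤ g k)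
    (hs : Summable fun k => g k ^ γ) : Tendsto g atTop (𝓝 0) := by
  have h := hs.tendsto_atTop_zero.rpow_const (p := γ⁻¹) (Or.inr (inv_nonneg.mpr hγ.le))
  rw [Real.zero_rpow (inv_ne_zero hγ.ne')] at h
  exact h.congr fun k => Real.rpow_rpow_inv (hg k) hγ.ne'

lemma tendsto_lintegral_truncSq_mul {α : Type*} [MeasurableSpace α] {ν : Measure α}
    [IsFiniteMeasure ν] {F : α → ℝ} (hF : Measurable F) {a : ℕ → ℝ}
    (ha : Tendsto a atTop (𝓝 0)) :
    Tendsto (fun n => ∫⁻ u, truncSq (F u * a n) ∂ν) atTop (𝓝 0) := by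
  have hlim := tendsto_lintegral_of_dominated_convergence (μ := ν) (f := fun _ => 0) 1
    (fun n => continuous_truncSq.measurable.comp (hF.mul_const (a n)))
    (fun n => .of_forall fun u => truncSq_le_one _) (by simp)
    (.of_forall fun u =>
      (continuous_truncSq.tendsto' 0 0 truncSq_zero).comp (by simpa using ha.const_mul (F u)))
  simpa using hlim

section Coupling

variable [MeasurableSpace E] [MeasurableSpace Ω] {ℙ : Measure Ω} [IsProbabilityMeasure ℙ]

lemma map_prod_uncurry_eq_of_integral_eq {μ : Measure E} [IsFiniteMeasure μ] {Φ : E → Ω → E}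
    (hΦ : Measurable (Function.uncurry Φ))
    (hinv : ∀ f : E → ℝ, Measurable f → Bdd f → ∫ u, ∫ ω, f (Φ u ω) ∂ℙ ∂μ = ∫ u, f u ∂μ) :
    (μ.prod ℙ).map (Function.uncurry Φ) = μ := by
  refine Measure.ext fun s hs => ?_
  have hind : Measurable (s.indicator (1 : E → ℝ)) := measurable_one.indicator hs
  have hbdd : Bdd (s.indicator (1 : E → ℝ)) :=
    ⟨1, fun u => by by_cases hu : u ∈ s <;> simp [hu]⟩
  have hint : Integrable (fun p => s.indicator (1 : E → ℝ) (Function.uncurry Φ p)) (μ.prod ℙ) :=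
    .of_bound (hind.comp hΦ).aestronglyMeasurable 1 (.of_forall fun p => by
      by_cases hp : Function.uncurry Φ p ∈ s <;> simp [hp])
  have hreal : ((μ.prod ℙ).map (Function.uncurry Φ)).real s = μ.real s := by
    rw [← integral_indicator_one hs, ← integral_indicator_one hs,
      integral_map hΦ.aemeasurable hind.aestronglyMeasurable, integral_prod _ hint]
    exact hinv _ hind hbdd
  simpa [measureReal_def, ENNReal.toReal_eq_toReal_iff', measure_ne_top] using hreal

/-- Both dynamics, started independently from `μ` and `ν`, are driven by the same noise `ω`. -/
def syncCoupling (μ ν : Measure E) (ℙ : Measure Ω) (Φ Ψ : E → Ω → E) : Measure (E × E) :=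
  ((μ.prod ν).prod ℙ).map fun p => (Φ p.1.1 p.2, Ψ p.1.2 p.2)

variable {μ ν : Measure E} {Φ Ψ : E → Ω → E}

lemma measurable_syncCoupling_map (hΦ : Measurable (Function.uncurry Φ))
    (hΨ : Measurable (Function.uncurry Ψ)) :
    Measurable fun p : (E × E) × Ω => (Φ p.1.1 p.2, Ψ p.1.2 p.2) :=
  (hΦ.comp (measurable_fst.fst.prodMk measurable_snd)).prodMk
    (hΨ.comp (measurable_fst.snd.prodMk measurable_snd))

lemma isCoupling_syncCoupling [IsProbabilityMeasure μ] [IsProbabilityMeasure ν]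
    (hΦ : Measurable (Function.uncurry Φ)) (hΨ : Measurable (Function.uncurry Ψ))
    (hμ : (μ.prod ℙ).map (Function.uncurry Φ) = μ)
    (hν : (ν.prod ℙ).map (Function.uncurry Ψ) = ν) :
    IsCoupling μ ν (syncCoupling μ ν ℙ Φ Ψ) := by
  have hmap := measurable_syncCoupling_map hΦ hΨ
  refine ⟨Measure.isProbabilityMeasure_map (μ := (μ.prod ν).prod ℙ) hmap.aemeasurable, ?_, ?_⟩
  · rw [syncCoupling, Measure.map_map measurable_fst hmap]
    change ((μ.prod ν).prod ℙ).map (Function.uncurry Φ ∘ Prod.map Prod.fst id) = μ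
    rw [← Measure.map_map hΦ (measurable_fst.prodMap measurable_id),
      ← Measure.map_prod_map _ _ measurable_fst measurable_id]
    simpa using hμ
  · rw [syncCoupling, Measure.map_map measurable_snd hmap]
    change ((μ.prod ν).prod ℙ).map (Function.uncurry Ψ ∘ Prod.map Prod.snd id) = ν
    rw [← Measure.map_map hΨ (measurable_snd.prodMap measurable_id),
      ← Measure.map_prod_map _ _ measurable_snd measurable_id]
    simpa using hν

lemma lintegral_syncCoupling [SFinite ν] (hΦ : Measurable (Function.uncurry Φ))
    (hΨ : Measurable (Function.uncurry Ψ)) {g : E × E → ℝ≥0∞} (hg : Measurable g) :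
    ∫⁻ pr, g pr ∂syncCoupling μ ν ℙ Φ Ψ = ∫⁻ u, ∫⁻ v, ∫⁻ ω, g (Φ u ω, Ψ v ω) ∂ℙ ∂ν ∂μ := by
  have hmap := measurable_syncCoupling_map hΦ hΨ
  have hcomp : Measurable fun p : (E × E) × Ω => g (Φ p.1.1 p.2, Ψ p.1.2 p.2) := hg.comp hmap
  rw [syncCoupling, lintegral_map hg hmap, lintegral_prod _ hcomp.aemeasurable,
    lintegral_prod _ hcomp.lintegral_prod_right'.aemeasurable]

end Coupling

section Wasserstein

variable [NormedAddCommGroup E] [MeasurableSpace E] [BorelSpace E] [SecondCountableTopology E]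

lemma measurable_truncSq_norm_sub : Measurable fun pr : E × E => truncSq ‖pr.1 - pr.2‖ :=
  continuous_truncSq.measurable.comp (measurable_fst.sub measurable_snd).norm

lemma ofReal_iInf_cost_le {ν₁ ν₂ : Measure E} {π : Measure (E × E)} (hπ : IsCoupling ν₁ ν₂ π) :
    ENNReal.ofReal (⨅ π : {π : Measure (E × E) // IsCoupling ν₁ ν₂ π},
        ∫ pr : E × E, min 1 (‖pr.1 - pr.2‖ ^ 2) ∂π.1) ≤
      ∫⁻ pr, truncSq ‖pr.1 - pr.2‖ ∂π := by
  have := hπ.1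
  have hcost0 : ∀ pr : E × E, 0 ≤ min 1 (‖pr.1 - pr.2‖ ^ 2) := fun _ => by positivity
  have hcost : Measurable fun pr : E × E => min 1 (‖pr.1 - pr.2‖ ^ 2) :=
    measurable_const.min ((measurable_fst.sub measurable_snd).norm.pow_const 2)
  have hint : Integrable (fun pr : E × E => min 1 (‖pr.1 - pr.2‖ ^ 2)) π :=
    .of_bound hcost.aestronglyMeasurable 1 (.of_forall fun pr => by
      rw [Real.norm_of_nonneg (hcost0 pr)]; exact min_le_left _ _)
  have hbdd : BddBelow (range fun π : {π : Measure (E × E) // IsCoupling ν₁ ν₂ π} =>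
      ∫ pr : E × E, min 1 (‖pr.1 - pr.2‖ ^ 2) ∂π.1) := by
    refine ⟨0, ?_⟩
    rintro _ ⟨π', rfl⟩
    exact integral_nonneg hcost0
  calc _ ≤ ENNReal.ofReal (∫ pr : E × E, min 1 (‖pr.1 - pr.2‖ ^ 2) ∂π) :=
        ENNReal.ofReal_le_ofReal (ciInf_le hbdd ⟨π, hπ⟩)
    _ = _ := ofReal_integral_eq_lintegral_ofReal hint (.of_forall hcost0)

lemma W2_le_of_tendsto {ν₁ ν₂ : Measure E} {π : ℕ → Measure (E × E)}
    (hπ : ∀ n, IsCoupling ν₁ ν₂ (π n)) {c : ℕ → ℝ≥0∞} {L : ℝ≥0∞}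
    (hc : ∀ n, ∫⁻ pr, truncSq ‖pr.1 - pr.2‖ ∂π n ≤ c n) (hlim : Tendsto c atTop (𝓝 L))
    {K : ℝ} (hK : 0 ≤ K) (hL : L ≤ ENNReal.ofReal (K ^ 2)) : W2 ν₁ ν₂ ≤ K := by
  set I := ⨅ π : {π : Measure (E × E) // IsCoupling ν₁ ν₂ π},
    ∫ pr : E × E, min 1 (‖pr.1 - pr.2‖ ^ 2) ∂π.1
  have hI0 : 0 ≤ I := Real.iInf_nonneg fun π => integral_nonneg fun _ => by positivity
  have hIK : I ≤ K ^ 2 := (ENNReal.ofReal_le_ofReal_iff (by positivity)).mp <|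
    (ge_of_tendsto' hlim fun n => (ofReal_iInf_cost_le (hπ n)).trans (hc n)).trans hL
  calc W2 ν₁ ν₂ = I ^ ((1 : ℝ) / 2) := rfl
    _ ≤ (K ^ 2) ^ ((1 : ℝ) / 2) := Real.rpow_le_rpow hI0 hIK (by norm_num)
    _ = K := by rw [← Real.sqrt_eq_rpow, Real.sqrt_sq hK]

variable [MeasurableSpace Ω] {ℙ : Measure Ω} [IsProbabilityMeasure ℙ]

lemma lintegral_truncSq_sub_le {Z₁ Z₂ Z₃ Z₄ : Ω → E} (h₁ : Measurable Z₁) (h₂ : Measurable Z₂)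
    (h₃ : Measurable Z₃) (h₄ : Measurable Z₄) {a b c : ℝ}
    (ha : eLpNorm (fun ω => Z₁ ω - Z₂ ω) 2 ℙ ≤ ENNReal.ofReal a)
    (hb : eLpNorm (fun ω => Z₂ ω - Z₃ ω) 2 ℙ ≤ ENNReal.ofReal b)
    (hc : eLpNorm (fun ω => Z₃ ω - Z₄ ω) 2 ℙ ≤ ENNReal.ofReal c) :
    ∫⁻ ω, truncSq ‖Z₁ ω - Z₄ ω‖ ∂ℙ ≤ 3 * truncSq a + 3 * truncSq b + 3 * truncSq c := by
  have hm : ∀ {Z Z' : Ω → E}, Measurable Z → Measurable Z' →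
      Measurable fun ω => truncSq ‖Z ω - Z' ω‖ :=
    fun hZ hZ' => continuous_truncSq.measurable.comp (hZ.sub hZ').norm
  calc ∫⁻ ω, truncSq ‖Z₁ ω - Z₄ ω‖ ∂ℙ
      ≤ ∫⁻ ω, (3 * truncSq ‖Z₁ ω - Z₂ ω‖ + 3 * truncSq ‖Z₂ ω - Z₃ ω‖ +
          3 * truncSq ‖Z₃ ω - Z₄ ω‖) ∂ℙ := by
        refine lintegral_mono fun ω => truncSq_le_of_le_add₃ (norm_nonneg _) ?_
        linarith [norm_sub_le_norm_sub_add_norm_sub (Z₁ ω) (Z₂ ω) (Z₄ ω),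
          norm_sub_le_norm_sub_add_norm_sub (Z₂ ω) (Z₃ ω) (Z₄ ω)]
    _ = 3 * ∫⁻ ω, truncSq ‖Z₁ ω - Z₂ ω‖ ∂ℙ + 3 * ∫⁻ ω, truncSq ‖Z₂ ω - Z₃ ω‖ ∂ℙ +
          3 * ∫⁻ ω, truncSq ‖Z₃ ω - Z₄ ω‖ ∂ℙ := by
        rw [lintegral_add_right _ ((hm h₃ h₄).const_mul 3),
          lintegral_add_right _ ((hm h₂ h₃).const_mul 3), lintegral_const_mul _ (hm h₁ h₂),
          lintegral_const_mul _ (hm h₂ h₃), lintegral_const_mul _ (hm h₃ h₄)]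
    _ ≤ 3 * truncSq a + 3 * truncSq b + 3 * truncSq c := by
        gcongr
        exacts [lintegral_truncSq_le_of_eLpNorm_le ha, lintegral_truncSq_le_of_eLpNorm_le hb,
          lintegral_truncSq_le_of_eLpNorm_le hc]

lemma lintegral_truncSq_syncCoupling_le {μ ν : Measure E} [IsProbabilityMeasure μ]
    [IsProbabilityMeasure ν] {Φ Ψ : E → Ω → E} (hΦ : Measurable (Function.uncurry Φ))
    (hΨ : Measurable (Function.uncurry Ψ)) {x y : E} {F G : E → ℝ} (hF : Measurable F)
    (hG : Measurable G) {a b R : ℝ}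
    (hΦx : ∀ u, eLpNorm (fun ω => Φ u ω - Φ x ω) 2 ℙ ≤ ENNReal.ofReal (F u * a))
    (hΨy : ∀ᵐ v ∂ν, eLpNorm (fun ω => Ψ y ω - Ψ v ω) 2 ℙ ≤ ENNReal.ofReal (G v * b))
    (hΦΨ : eLpNorm (fun ω => Φ x ω - Ψ y ω) 2 ℙ ≤ ENNReal.ofReal R) :
    ∫⁻ pr, truncSq ‖pr.1 - pr.2‖ ∂syncCoupling μ ν ℙ Φ Ψ ≤
      3 * ∫⁻ u, truncSq (F u * a) ∂μ + 3 * truncSq R + 3 * ∫⁻ v, truncSq (G v * b) ∂ν := by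
  have hΦ' : ∀ u, Measurable (Φ u) := fun u => hΦ.comp measurable_prodMk_left
  have hΨ' : ∀ v, Measurable (Ψ v) := fun v => hΨ.comp measurable_prodMk_left
  have hA : Measurable fun u => truncSq (F u * a) :=
    continuous_truncSq.measurable.comp (hF.mul_const a)
  have hC : Measurable fun v => truncSq (G v * b) :=
    continuous_truncSq.measurable.comp (hG.mul_const b)
  rw [lintegral_syncCoupling hΦ hΨ measurable_truncSq_norm_sub]
  calc ∫⁻ u, ∫⁻ v, ∫⁻ ω, truncSq ‖Φ u ω - Ψ v ω‖ ∂ℙ ∂ν ∂μ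
      ≤ ∫⁻ u, ∫⁻ v, (3 * truncSq (F u * a) + 3 * truncSq R + 3 * truncSq (G v * b)) ∂ν ∂μ :=
        lintegral_mono fun u => lintegral_mono_ae <| hΨy.mono fun v hv =>
          lintegral_truncSq_sub_le (hΦ' u) (hΦ' x) (hΨ' y) (hΨ' v) (hΦx u) hΦΨ hv
    _ = _ := by
        simp only [lintegral_add_right _ (hC.const_mul 3), lintegral_const, measure_univ,
          mul_one, lintegral_const_mul _ hC]
        rw [lintegral_add_right _ measurable_const, lintegral_add_right _ measurable_const,
          lintegral_const_mul _ hA]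
        simp

theorem W2_le_of_contracting_syncCoupling {μ ν : Measure E} [IsProbabilityMeasure μ]
    [IsProbabilityMeasure ν] {Φ Ψ : ℕ → E → Ω → E}
    (hΦ : ∀ n, Measurable (Function.uncurry (Φ n)))
    (hΨ : ∀ n, Measurable (Function.uncurry (Ψ n)))
    (hμ : ∀ n, (μ.prod ℙ).map (Function.uncurry (Φ n)) = μ)
    (hν : ∀ n, (ν.prod ℙ).map (Function.uncurry (Ψ n)) = ν)
    {x y : E} {F G : E → ℝ} (hF : Measurable F) (hG : Measurable G) {a b : ℕ → ℝ}
    (ha : Tendsto a atTop (𝓝 0)) (hb : Tendsto b atTop (𝓝 0))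
    (hΦx : ∀ n u, eLpNorm (fun ω => Φ n u ω - Φ n x ω) 2 ℙ ≤ ENNReal.ofReal (F u * a n))
    (hΨy : ∀ n, ∀ᵐ v ∂ν, eLpNorm (fun ω => Ψ n y ω - Ψ n v ω) 2 ℙ ≤ ENNReal.ofReal (G v * b n))
    {R : ℝ} (hR : 0 ≤ R)
    (hΦΨ : ∀ n, eLpNorm (fun ω => Φ n x ω - Ψ n y ω) 2 ℙ ≤ ENNReal.ofReal R) :
    W2 μ ν ≤ √3 * R := by
  have hlim : Tendsto (fun n => 3 * ∫⁻ u, truncSq (F u * a n) ∂μ + 3 * truncSq R +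
      3 * ∫⁻ v, truncSq (G v * b n) ∂ν) atTop (𝓝 (3 * 0 + 3 * truncSq R + 3 * 0)) :=
    ((ENNReal.Tendsto.const_mul (tendsto_lintegral_truncSq_mul hF ha) (by simp)).add
      tendsto_const_nhds).add
      (ENNReal.Tendsto.const_mul (tendsto_lintegral_truncSq_mul hG hb) (by simp))
  refine W2_le_of_tendsto
    (fun n => isCoupling_syncCoupling (hΦ n) (hΨ n) (hμ n) (hν n))
    (fun n => lintegral_truncSq_syncCoupling_le (hΦ n) (hΨ n) hF hG (hΦx n) (hΨy n) (hΦΨ n))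
    hlim (by positivity) ?_
  calc 3 * 0 + 3 * truncSq R + 3 * 0 ≤ 3 * ENNReal.ofReal (R ^ 2) := by
        simpa [truncSq] using
          mul_le_mul_right (ENNReal.ofReal_le_ofReal (min_le_right 1 (R ^ 2))) 3
    _ = ENNReal.ofReal ((√3 * R) ^ 2) := by
        rw [mul_pow, Real.sq_sqrt zero_le_three, ENNReal.ofReal_mul zero_le_three]
        simp

end Wasserstein

theorem statement10_general
    {E Ω : Type*} [NormedAddCommGroup E] [NormedSpace ℝ E]
    [SecondCountableTopology E] [MeasurableSpace E] [BorelSpace E]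
    {mΩ : MeasurableSpace Ω} (ℙ : Measure Ω) (ℱ : Filtration ℝ mΩ)
    (X : E → ℝ → Ω → E) (r rt γ₁ β L₁ L₂ : ℝ) (ρ : ℝ → ℝ)
    (Eh : ℝ → Set E) (Y : ℝ × ℝ → E → ℕ → Ω → E)
    (ht τt q qt γ₂ κ L₃ L₄ : ℝ) (ρD : ℝ × ℝ → ℝ → ℝ)
    (x : E) (xh : ℝ → E) (α₁ α₂ L₅ : ℝ)
    (hA1 : Assumption1 ℙ ℱ X r rt γ₁ β L₁ L₂ ρ)
    (hA2 : Assumption2 ℙ ℱ Eh Y ht τt q qt γ₂ κ L₃ L₄ ρD)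
    (hA3 : Assumption3 ℙ X Y Eh ht τt rt qt x xh α₁ α₂ L₅)
    (μ : Measure E) (hμ : IsInvMeasure ℙ X μ)
    (μD : ℝ × ℝ → Measure E)
    (hμD : ∀ Δ, Adm ht τt Δ → IsInvMeasureD ℙ Y (Eh Δ.1) Δ (μD Δ)) :
    ∃ K > (0 : ℝ), ∀ Δ, Adm ht τt Δ →
      W2 μ (μD Δ) ≤ K * (Δ.1 ^ α₁ + Δ.2 ^ α₂) := by
  have := hA1.prob
  have := hμ.1
  obtain ⟨t, ht_ge, hρt⟩ :=
    exists_seq_tendsto_zero_of_integrableOn_rpow hA1.hγ₁.1 hA1.ρ_nonneg hA1.ρ_int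
  have ht0 : ∀ n, 0 ≤ t n := fun n => n.cast_nonneg.trans (ht_ge n)
  obtain ⟨B, hB⟩ := hA2.ρD_sum
  refine ⟨√3 * (L₅ * (1 + ‖x‖ ^ max rt qt)), by have := hA3.hL₅; positivity, fun Δ hΔ => ?_⟩
  obtain ⟨hνprob, hνEh, hνinv⟩ := hμD Δ hΔ
  set k : ℕ → ℕ := fun n => ⌊t n / Δ.2⌋₊
  have hk : Tendsto k atTop atTop := tendsto_nat_floor_atTop.comp
    ((tendsto_atTop_mono ht_ge tendsto_natCast_atTop_atTop).atTop_div_const hΔ.2.1)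
  have hσ : Tendsto (fun n => ρD Δ (k n * Δ.2)) atTop (𝓝 0) :=
    (tendsto_zero_of_summable_rpow hA2.hγ₂.1 (fun _ => hA2.ρD_nonneg _ _) (hB Δ hΔ).1).comp hk
  have hR : 0 ≤ L₅ * (1 + ‖x‖ ^ max rt qt) * (Δ.1 ^ α₁ + Δ.2 ^ α₂) :=
    mul_nonneg (mul_nonneg hA3.hL₅.le (by positivity))
      (add_nonneg (Real.rpow_nonneg hΔ.1.1 α₁) (Real.rpow_nonneg hΔ.2.1.le α₂))
  rw [mul_assoc]
  exact W2_le_of_contracting_syncCoupling (Φ := fun n u ω => X u (t n) ω)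
    (Ψ := fun n v ω => Y Δ v (k n) ω) (x := x) (y := xh Δ.1)
    (F := fun u => L₂ * ‖u - x‖ * (1 + ‖u‖ ^ β + ‖x‖ ^ β))
    (G := fun v => L₄ * ‖xh Δ.1 - v‖ * (1 + ‖xh Δ.1‖ ^ κ + ‖v‖ ^ κ))
    (fun n => hA1.jmeas (t n)) (fun n => hA2.jmeas Δ (k n))
    (fun n => map_prod_uncurry_eq_of_integral_eq (hA1.jmeas (t n)) (hμ.2 (t n) (ht0 n)))
    (fun n => map_prod_uncurry_eq_of_integral_eq (hA2.jmeas Δ (k n)) (hνinv (k n)))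
    (by fun_prop) (by fun_prop) hρt hσ
    (fun n u => (eLpNorm_two_eq ℙ _).trans_le (hA1.contract u x (t n) (ht0 n)))
    (fun n => Eventually.mono (mem_ae_iff.mpr hνEh) fun v hv => (eLpNorm_two_eq ℙ _).trans_le
      (hA2.contract Δ hΔ (xh Δ.1) (hA3.xh_mem Δ.1 hΔ.1) v hv (k n)))
    hR (fun n => (eLpNorm_two_eq ℙ _).trans_le (hA3.conv Δ hΔ (t n) (ht0 n)))

/-- convergence of the numerical invariant measure in the bounded
Wasserstein distance: `W₂(μ, μ^Δ) ≤ K·|Δ^α| = K(h^{α₁}+τ^{α₂})`, with `K`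
independent of the admissible step size. -/
theorem statement10
    {E Ω : Type*} [NormedAddCommGroup E] [NormedSpace ℝ E] [CompleteSpace E]
    [SecondCountableTopology E] [MeasurableSpace E] [BorelSpace E]
    {mΩ : MeasurableSpace Ω} (ℙ : Measure Ω) (ℱ : Filtration ℝ mΩ)
    (X : E → ℝ → Ω → E) (r rt γ₁ β L₁ L₂ : ℝ) (ρ : ℝ → ℝ)
    (Eh : ℝ → Set E) (Y : ℝ × ℝ → E → ℕ → Ω → E)
    (ht τt q qt γ₂ κ L₃ L₄ : ℝ) (ρD : ℝ × ℝ → ℝ → ℝ)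
    (x : E) (xh : ℝ → E) (α₁ α₂ L₅ : ℝ)
    (hA1 : Assumption1 ℙ ℱ X r rt γ₁ β L₁ L₂ ρ)
    (hA2 : Assumption2 ℙ ℱ Eh Y ht τt q qt γ₂ κ L₃ L₄ ρD)
    (hA3 : Assumption3 ℙ X Y Eh ht τt rt qt x xh α₁ α₂ L₅)
    (μ : Measure E) (hμ : IsInvMeasure ℙ X μ)
    (μD : ℝ × ℝ → Measure E)
    (hμD : ∀ Δ, Adm ht τt Δ → IsInvMeasureD ℙ Y (Eh Δ.1) Δ (μD Δ)) :
    ∃ K > (0 : ℝ), ∀ Δ, Adm ht τt Δ →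
      W2 μ (μD Δ) ≤ K * (Δ.1 ^ α₁ + Δ.2 ^ α₂) :=
  statement10_general ℙ ℱ X r rt γ₁ β L₁ L₂ ρ Eh Y ht τt q qt γ₂ κ L₃ L₄ ρD x xh α₁ α₂ L₅ hA1 hA2
    hA3 μ hμ μD hμD
end PaperProb
end
end
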